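/- arXiv:math/0611217 — 2 statements merged into one kernel-verified Lean document; each statement's English description precedes it below -/
import Mathlib

section
/- Let P, P_0, P_1, … be transition kernels on a measurable space X such that: (i) P_n(x,A) → P(x,A) for every x and measurable A; (ii) P has invariant distribution π, each P_n has invariant distribution π_n, and there exist ρ ∈ (0,1) and C with ‖P^k − π‖ ≤ Cρ^k and ‖P_n^k − π_n‖ ≤ Cρ^k for all n,k. Then π_n(f) → π(f) for every bounded measurable function f. -/
open MeasureTheory ProbabilityTheory Filter Topology

noncomputable def iterKer {X : Type*} [MeasurableSpace X] (P : Kernel X X) : ℕ → Kernel X X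
  | 0 => Kernel.id
  | n + 1 => (iterKer P n) ∘ₖ P

/-!
Setwise convergence `Pₙ(x,·) → P(x,·)` passes to the iterates, `Pₙᵏ(x,·) → Pᵏ(x,·)` setwise
for every `k`, by induction on `k` and a dominated convergence theorem for setwise convergent
measures (Serfozo): if `μₙ → ν` setwise and `gₙ → g` pointwise with a uniform bound, then
`∫ gₙ dμₙ → ∫ g dν`. Its base case `gₙ = g` follows from the layer cake formula.
Fixing `x₀` and `k`, uniform ergodicity gives
`|πₙ(f) - π(f)| ≤ 2 ‖f‖∞ C ρᵏ + |Pₙᵏ f(x₀) - Pᵏ f(x₀)|`; the last term tends to `0` as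
`n → ∞`, and then `ρᵏ → 0`.
-/

theorem tendsto_of_forall_eventually_dist_le {α β E : Type*} [PseudoMetricSpace E]
    {l : Filter α} {l' : Filter β} [l'.NeBot] {u : α → E} {y : E} {c : β → α → ℝ} {b : β → ℝ}
    (hle : ∀ m, ∀ᶠ n in l, dist (u n) y ≤ c m n) (hc : ∀ m, Tendsto (c m) l (𝓝 (b m)))
    (hb : Tendsto b l' (𝓝 0)) : Tendsto u l (𝓝 y) := by
  refine Metric.tendsto_nhds.2 fun ε hε => ?_
  obtain ⟨m, hm⟩ := (hb.eventually (gt_mem_nhds hε)).exists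
  filter_upwards [hle m, (hc m).eventually (gt_mem_nhds hm)] with n h₁ h₂ using h₁.trans_lt h₂

section Setwise

variable {X : Type*} [MeasurableSpace X]

def TendstoSetwise (μ : ℕ → Measure X) (ν : Measure X) : Prop :=
  ∀ A, MeasurableSet A → Tendsto (fun n => (μ n).real A) atTop (𝓝 (ν.real A))

variable {μ : ℕ → Measure X} {ν : Measure X} [∀ n, IsProbabilityMeasure (μ n)]
  [IsProbabilityMeasure ν]

theorem TendstoSetwise.tendsto_integral_of_nonneg (h : TendstoSetwise μ ν) {f : X → ℝ}
    (hf : Measurable f) {M : ℝ} (hf0 : ∀ x, 0 ≤ f x) (hfM : ∀ x, f x ≤ M) :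
    Tendsto (fun n => ∫ x, f x ∂μ n) atTop (𝓝 (∫ x, f x ∂ν)) := by
  have hlayer (μ' : Measure X) [IsProbabilityMeasure μ'] :
      ∫ x, f x ∂μ' = ∫ t in Set.Ioc 0 M, μ'.real {x | t ≤ f x} :=
    (Integrable.of_bound hf.aestronglyMeasurable M (ae_of_all _ fun x => by
      rw [Real.norm_of_nonneg (hf0 x)]; exact hfM x)).integral_eq_integral_Ioc_meas_le
      (ae_of_all _ hf0) (ae_of_all _ hfM)
  simp only [hlayer]
  refine tendsto_integral_of_dominated_convergence (fun _ => 1) (fun n => ?_)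
    (integrable_const 1) (fun n => ae_of_all _ fun t => ?_)
    (ae_of_all _ fun t => h _ (measurableSet_le measurable_const hf))
  · refine Measurable.aestronglyMeasurable <| Antitone.measurable
      (f := fun t : ℝ => (μ n).real {x | t ≤ f x}) fun s t hst => ?_
    exact measureReal_mono fun x hx => hst.trans hx
  · rw [Real.norm_of_nonneg measureReal_nonneg]
    exact measureReal_le_one

theorem TendstoSetwise.tendsto_integral (h : TendstoSetwise μ ν) {f : X → ℝ}
    (hf : Measurable f) {M : ℝ} (hfM : ∀ x, |f x| ≤ M) :
    Tendsto (fun n => ∫ x, f x ∂μ n) atTop (𝓝 (∫ x, f x ∂ν)) := by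
  have hshift (μ' : Measure X) [IsProbabilityMeasure μ'] :
      ∫ x, f x ∂μ' = ∫ x, (f x + M) ∂μ' - M := by
    rw [integral_add (Integrable.of_bound hf.aestronglyMeasurable M (ae_of_all _ hfM))
      (integrable_const M)]
    simp
  simp only [hshift]
  refine (h.tendsto_integral_of_nonneg (hf.add_const M) (M := 2 * M) (fun x => ?_)
    (fun x => ?_)).sub_const M
  · linarith [neg_abs_le (f x), hfM x]
  · linarith [le_abs_self (f x), hfM x]

theorem TendstoSetwise.tendsto_integral_of_tendsto (h : TendstoSetwise μ ν)
    {g : ℕ → X → ℝ} {g' : X → ℝ} (hg : ∀ n, Measurable (g n)) (hg' : Measurable g') {M : ℝ}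
    (hgM : ∀ n x, |g n x| ≤ M) (hlim : ∀ x, Tendsto (fun n => g n x) atTop (𝓝 (g' x))) :
    Tendsto (fun n => ∫ x, g n x ∂μ n) atTop (𝓝 (∫ x, g' x ∂ν)) := by
  have hg'M (x : X) : |g' x| ≤ M := le_of_tendsto' (hlim x).abs fun n => hgM n x
  have hdiffM (n : ℕ) (x : X) : |g n x - g' x| ≤ 2 * M :=
    (abs_sub _ _).trans (by linarith [hgM n x, hg'M x])
  set ψ : ℕ → X → ℝ := fun m x => ⨆ j, |g (m + j) x - g' x|
  have hbdd (m : ℕ) (x : X) : BddAbove (Set.range fun j => |g (m + j) x - g' x|) :=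
    ⟨2 * M, by rintro _ ⟨j, rfl⟩; exact hdiffM _ x⟩
  have hψ_meas (m : ℕ) : Measurable (ψ m) := Measurable.iSup fun j => ((hg _).sub hg').abs
  have hψM (m : ℕ) (x : X) : |ψ m x| ≤ 2 * M := by
    rw [abs_of_nonneg ((abs_nonneg _).trans (le_ciSup (hbdd m x) 0))]
    exact ciSup_le fun j => hdiffM _ x
  have hle_ψ (m n : ℕ) (hmn : m ≤ n) (x : X) : |g n x - g' x| ≤ ψ m x := by
    obtain ⟨j, rfl⟩ := Nat.exists_eq_add_of_le hmn
    exact le_ciSup (hbdd m x) j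
  have hψ_lim (x : X) : Tendsto (fun m => ψ m x) atTop (𝓝 0) := by
    refine Metric.tendsto_atTop.2 fun ε hε => ?_
    obtain ⟨K, hK⟩ := Metric.tendsto_atTop.1 (hlim x) (ε / 2) (half_pos hε)
    refine ⟨K, fun m hm => ?_⟩
    have : ψ m x ≤ ε / 2 := ciSup_le fun j => (hK (m + j) (by omega)).le
    rw [Real.dist_0_eq_abs, abs_of_nonneg ((abs_nonneg _).trans (le_ciSup (hbdd m x) 0))]
    linarith
  have hψ_int : Tendsto (fun m => ∫ x, ψ m x ∂ν) atTop (𝓝 0) := by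
    simpa using tendsto_integral_of_dominated_convergence (fun _ => 2 * M)
      (fun m => (hψ_meas m).aestronglyMeasurable) (integrable_const _)
      (fun m => ae_of_all _ (hψM m)) (ae_of_all _ hψ_lim)
  have hfirst : Tendsto (fun n => ∫ x, g n x ∂μ n - ∫ x, g' x ∂μ n) atTop (𝓝 0) := by
    refine tendsto_of_forall_eventually_dist_le (l' := atTop)
      (c := fun m n => ∫ x, ψ m x ∂μ n) (fun m => eventually_atTop.2 ⟨m, fun n hn => ?_⟩)
      (fun m => h.tendsto_integral (hψ_meas m) (hψM m)) hψ_int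
    rw [dist_zero_right, ← integral_sub (Integrable.of_bound (hg n).aestronglyMeasurable M
      (ae_of_all _ (hgM n))) (Integrable.of_bound hg'.aestronglyMeasurable M
      (ae_of_all _ hg'M))]
    exact norm_integral_le_of_norm_le (Integrable.of_bound (hψ_meas m).aestronglyMeasurable
      _ (ae_of_all _ (hψM m))) (ae_of_all _ (hle_ψ m n hn))
  rw [← tendsto_sub_nhds_zero_iff]
  simpa using hfirst.add ((h.tendsto_integral hg' hg'M).sub_const (∫ x, g' x ∂ν))

end Setwise

theorem measureReal_comp_apply {α β γ : Type*} [MeasurableSpace α] [MeasurableSpace β]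
    [MeasurableSpace γ] (η : Kernel β γ) [IsFiniteKernel η] (κ : Kernel α β) (a : α)
    {A : Set γ} (hA : MeasurableSet A) :
    ((η ∘ₖ κ) a).real A = ∫ b, (η b).real A ∂κ a := by
  simp only [measureReal_def]
  rw [Kernel.comp_apply' _ _ _ hA, integral_toReal (η.measurable_coe hA).aemeasurable
    (ae_of_all _ fun b => measure_lt_top _ _)]

section IterKer

variable {X : Type*} [MeasurableSpace X]

instance iterKer.isMarkovKernel (P : Kernel X X) [IsMarkovKernel P] (k : ℕ) :
    IsMarkovKernel (iterKer P k) := by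
  induction k with
  | zero => exact inferInstanceAs (IsMarkovKernel Kernel.id)
  | succ k ih => exact inferInstanceAs (IsMarkovKernel (iterKer P k ∘ₖ P))

theorem tendstoSetwise_iterKer {P : Kernel X X} {Pn : ℕ → Kernel X X} [IsMarkovKernel P]
    [∀ n, IsMarkovKernel (Pn n)] (h : ∀ x, TendstoSetwise (fun n => Pn n x) (P x))
    (k : ℕ) (x : X) : TendstoSetwise (fun n => iterKer (Pn n) k x) (iterKer P k x) := by
  induction k generalizing x with
  | zero => exact fun A _ => tendsto_const_nhds
  | succ k ih =>
    intro A hA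
    simp only [iterKer, measureReal_comp_apply _ _ _ hA]
    refine (h x).tendsto_integral_of_tendsto (M := 1)
      (fun n => ((iterKer (Pn n) k).measurable_coe hA).ennreal_toReal)
      ((iterKer P k).measurable_coe hA).ennreal_toReal (fun n y => ?_) (fun y => ih y A hA)
    rw [abs_of_nonneg measureReal_nonneg]
    exact measureReal_le_one

end IterKer

theorem abs_integral_sub_integral_le_mul {X : Type*} [MeasurableSpace X] {μ ν : Measure X}
    {B : ℝ} (h : ∀ f : X → ℝ, Measurable f → (∀ x, |f x| ≤ 1) →
      |∫ x, f x ∂μ - ∫ x, f x ∂ν| ≤ B)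
    {f : X → ℝ} (hf : Measurable f) {M : ℝ} (hM : 0 < M) (hfM : ∀ x, |f x| ≤ M) :
    |∫ x, f x ∂μ - ∫ x, f x ∂ν| ≤ M * B := by
  have := h (fun x => f x / M) (hf.div_const M) fun x => by
    rw [abs_div, abs_of_pos hM, div_le_one hM]; exact hfM x
  rwa [integral_div, integral_div, ← sub_div, abs_div, abs_of_pos hM, div_le_iff₀' hM] at this

theorem stmt2_general {X : Type*} [MeasurableSpace X]
    (P : Kernel X X) (Pn : ℕ → Kernel X X)
    [IsMarkovKernel P] [∀ n, IsMarkovKernel (Pn n)]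
    (π : Measure X) (πn : ℕ → Measure X)
    [IsProbabilityMeasure π] [∀ n, IsProbabilityMeasure (πn n)]
    (hconv : ∀ (x : X) (A : Set X), MeasurableSet A →
      Tendsto (fun n => ((Pn n) x A).toReal) atTop (𝓝 ((P x A).toReal)))
    (C ρ : ℝ) (hρ : ρ ∈ Set.Ioo (0 : ℝ) 1)
    (hP : ∀ (k : ℕ) (f : X → ℝ), Measurable f → (∀ x, |f x| ≤ 1) →
      ∀ x, |(∫ y, f y ∂(iterKer P k x)) - ∫ y, f y ∂π| ≤ C * ρ ^ k)
    (hPn : ∀ (n k : ℕ) (f : X → ℝ), Measurable f → (∀ x, |f x| ≤ 1) →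
      ∀ x, |(∫ y, f y ∂(iterKer (Pn n) k x)) - ∫ y, f y ∂(πn n)| ≤ C * ρ ^ k) :
    ∀ (f : X → ℝ), Measurable f → (∃ M, ∀ x, |f x| ≤ M) →
      Tendsto (fun n => ∫ x, f x ∂(πn n)) atTop (𝓝 (∫ x, f x ∂π)) := by
  rintro f hf ⟨M, hfM⟩
  obtain ⟨x₀⟩ := nonempty_of_isProbabilityMeasure π
  set M' := max M 1
  have hM' : 0 < M' := zero_lt_one.trans_le (le_max_right M 1)
  have hfM' (x : X) : |f x| ≤ M' := (hfM x).trans (le_max_left M 1)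
  set err : ℕ → ℝ := fun k => 2 * (M' * (C * ρ ^ k))
  refine tendsto_of_forall_eventually_dist_le (l' := atTop) (b := err)
    (c := fun k n => err k +
      dist (∫ y, f y ∂(iterKer (Pn n) k x₀)) (∫ y, f y ∂(iterKer P k x₀)))
    (fun k => Eventually.of_forall fun n => ?_) (fun k => ?_) ?_
  · have h₁ := abs_integral_sub_integral_le_mul (fun g hg hg1 => hPn n k g hg hg1 x₀) hf hM' hfM'
    have h₂ := abs_integral_sub_integral_le_mul (fun g hg hg1 => hP k g hg hg1 x₀) hf hM' hfM'
    calc _ ≤ dist (∫ x, f x ∂πn n) (∫ y, f y ∂(iterKer (Pn n) k x₀))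
          + dist (∫ y, f y ∂(iterKer (Pn n) k x₀)) (∫ y, f y ∂(iterKer P k x₀))
          + dist (∫ y, f y ∂(iterKer P k x₀)) (∫ x, f x ∂π) := dist_triangle4 _ _ _ _
      _ ≤ _ := by
        rw [dist_comm (∫ x, f x ∂πn n), Real.dist_eq, Real.dist_eq (∫ y, f y ∂(iterKer P k x₀))]
        linarith
  · have := ((tendstoSetwise_iterKer (fun x => hconv x) k x₀).tendsto_integral hf hfM').dist
      (tendsto_const_nhds (x := ∫ y, f y ∂(iterKer P k x₀)))
    simpa using (tendsto_const_nhds (x := err k)).add this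
  · simpa [err] using ((tendsto_pow_atTop_nhds_zero_of_lt_one hρ.1.le hρ.2).const_mul C
      |>.const_mul M').const_mul 2

/-- If `Pₙ(x,A) → P(x,A)` setwise and both `P` and all `Pₙ` are uniformly geometrically
ergodic with common constants `C, ρ` towards their invariant distributions `π`, `πₙ`,
then `πₙ(f) → π(f)` for every bounded measurable `f`. -/
theorem stmt2 {X : Type*} [MeasurableSpace X]
    (P : Kernel X X) (Pn : ℕ → Kernel X X)
    [IsMarkovKernel P] [∀ n, IsMarkovKernel (Pn n)]
    (π : Measure X) (πn : ℕ → Measure X)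
    [IsProbabilityMeasure π] [∀ n, IsProbabilityMeasure (πn n)]
    (hπinv : π.bind (fun x => P x) = π)
    (hπninv : ∀ n, (πn n).bind (fun x => Pn n x) = πn n)
    (hconv : ∀ (x : X) (A : Set X), MeasurableSet A →
      Tendsto (fun n => ((Pn n) x A).toReal) atTop (𝓝 ((P x A).toReal)))
    (C ρ : ℝ) (hρ : ρ ∈ Set.Ioo (0 : ℝ) 1)
    (hP : ∀ (k : ℕ) (f : X → ℝ), Measurable f → (∀ x, |f x| ≤ 1) →
      ∀ x, |(∫ y, f y ∂(iterKer P k x)) - ∫ y, f y ∂π| ≤ C * ρ ^ k)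
    (hPn : ∀ (n k : ℕ) (f : X → ℝ), Measurable f → (∀ x, |f x| ≤ 1) →
      ∀ x, |(∫ y, f y ∂(iterKer (Pn n) k x)) - ∫ y, f y ∂(πn n)| ≤ C * ρ ^ k) :
    ∀ (f : X → ℝ), Measurable f → (∃ M, ∀ x, |f x| ≤ M) →
      Tendsto (fun n => ∫ x, f x ∂(πn n)) atTop (𝓝 (∫ x, f x ∂π)) :=
  stmt2_general P Pn π πn hconv C ρ hρ hP hPn
end

section
/- Theorem V.4.5 of Isaacson–Madsen: let P, P_0, P_1, … be transition kernels with ‖P_n − P‖ → 0 in the uniform operator norm, and suppose P is uniformly geometrically ergodic with invariant distribution π. Then the nonhomogeneous chain with kernels (P_n) is strongly ergodic: for any initial distribution μ, ‖μ P_0 P_1 ⋯ P_n − π‖_{TV} → 0 as n → ∞. -/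
/-! Fix `k` with `C ρ ^ k ≤ ε / 2`. Over a window of `k` steps starting at a late time `m`, the
chain moves `ν m` by `Pₘ ⋯ Pₘ₊ₖ₋₁`; when each `Pⱼ` is within `δ` of `P` on test functions
`|f| ≤ 1`, a telescoping argument (Markov kernels map test functions to test functions) shows that
this differs from `ν m Pᵏ` by at most `k δ`. Uniform ergodicity puts `ν m Pᵏ` within `C ρ ^ k` of
`π`, whatever `ν m` is, so choosing `δ = ε / (2 (k + 1))` finishes the proof. -/

open MeasureTheory ProbabilityTheory Filter Topology

section

variable {X Y : Type*} [MeasurableSpace X] [MeasurableSpace Y]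

lemma abs_integral_le_of_forall_abs_le {m : Measure X} [IsProbabilityMeasure m] {f : X → ℝ}
    {c : ℝ} (hf : ∀ x, |f x| ≤ c) : |∫ x, f x ∂m| ≤ c := by
  simpa using norm_integral_le_of_norm_le_const (μ := m) (f := f) (ae_of_all _ hf)

lemma abs_integral_sub_integral_le {m : Measure X} [IsProbabilityMeasure m] {f g : X → ℝ}
    (hf : Integrable f m) (hg : Integrable g m) {δ : ℝ} (hfg : ∀ x, |f x - g x| ≤ δ) :
    |∫ x, f x ∂m - ∫ x, g x ∂m| ≤ δ := by
  rw [← integral_sub hf hg]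
  exact abs_integral_le_of_forall_abs_le hfg

lemma integrable_of_abs_le_one {m : Measure X} [IsFiniteMeasure m] {f : X → ℝ}
    (hf : Measurable f) (hb : ∀ x, |f x| ≤ 1) : Integrable f m :=
  .of_bound hf.aestronglyMeasurable 1 (ae_of_all _ hb)

lemma measurable_integral_kernel (K : Kernel X Y) {f : Y → ℝ} (hf : Measurable f) :
    Measurable fun x ↦ ∫ y, f y ∂K x :=
  hf.stronglyMeasurable.integral_kernel.measurable

lemma abs_integral_kernel_le_one (K : Kernel X Y) [IsMarkovKernel K] {f : Y → ℝ}
    (hb : ∀ y, |f y| ≤ 1) (x : X) : |∫ y, f y ∂K x| ≤ 1 :=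
  abs_integral_le_of_forall_abs_le hb

lemma integrable_integral_kernel_of_abs_le_one {m : Measure X} [IsFiniteMeasure m]
    (K : Kernel X Y) [IsMarkovKernel K] {f : Y → ℝ} (hf : Measurable f) (hb : ∀ y, |f y| ≤ 1) :
    Integrable (fun x ↦ ∫ y, f y ∂K x) m :=
  integrable_of_abs_le_one (measurable_integral_kernel K hf) (abs_integral_kernel_le_one K hb)

lemma integral_bind_kernel {m : Measure X} [SFinite m] {K : Kernel X Y} [IsSFiniteKernel K]
    {f : Y → ℝ} (hf : Integrable f (m.bind K)) :
    ∫ y, f y ∂(m.bind K) = ∫ x, ∫ y, f y ∂K x ∂m := by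
  rw [Measure.comp_eq_comp_const_apply] at hf ⊢
  simpa using Kernel.integral_comp hf

instance isMarkovKernel_iterKer (P : Kernel X X) [IsMarkovKernel P] (k : ℕ) : IsMarkovKernel (iterKer P k) := by
  induction k with
  | zero => rw [iterKer]; infer_instance
  | succ k _ => rw [iterKer]; infer_instance

lemma integral_iterKer_zero (P : Kernel X X) {f : X → ℝ} (hf : Measurable f) (x : X) :
    ∫ y, f y ∂iterKer P 0 x = f x := by
  rw [iterKer, Kernel.id_apply, integral_dirac' f x hf.stronglyMeasurable]

lemma integral_iterKer_succ (P : Kernel X X) [IsMarkovKernel P] (k : ℕ) {f : X → ℝ} {x : X}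
    (hf : Integrable f (iterKer P (k + 1) x)) :
    ∫ y, f y ∂iterKer P (k + 1) x = ∫ z, ∫ y, f y ∂iterKer P k z ∂P x :=
  Kernel.integral_comp hf

theorem abs_integral_sub_integral_iterKer_le {P : Kernel X X} [IsMarkovKernel P]
    {Pn : ℕ → Kernel X X} [∀ n, IsMarkovKernel (Pn n)]
    {ν : ℕ → Measure X} [∀ n, IsProbabilityMeasure (ν n)]
    (hν : ∀ n, ν (n + 1) = (ν n).bind (Pn n)) {N : ℕ} {δ : ℝ}
    (hδ : ∀ n ≥ N, ∀ f : X → ℝ, Measurable f → (∀ x, |f x| ≤ 1) →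
      ∀ x, |∫ y, f y ∂Pn n x - ∫ y, f y ∂P x| ≤ δ)
    (k : ℕ) {m : ℕ} (hm : N ≤ m) {f : X → ℝ} (hf : Measurable f) (hb : ∀ x, |f x| ≤ 1) :
    |∫ x, f x ∂ν (m + k) - ∫ x, ∫ y, f y ∂iterKer P k x ∂ν m| ≤ k * δ := by
  induction k generalizing m with
  | zero => simp [integral_iterKer_zero P hf]
  | succ k ih =>
    set g := fun x ↦ ∫ y, f y ∂iterKer P k x
    have hg : Measurable g := measurable_integral_kernel _ hf
    have hgb : ∀ x, |g x| ≤ 1 := abs_integral_kernel_le_one _ hb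
    have h_tail : |∫ x, f x ∂ν (m + 1 + k) - ∫ x, g x ∂ν (m + 1)| ≤ k * δ :=
      ih (hm.trans m.le_succ)
    have h_step : ∫ x, g x ∂ν (m + 1) = ∫ x, ∫ y, g y ∂Pn m x ∂ν m := by
      rw [hν]
      exact integral_bind_kernel (integrable_of_abs_le_one hg hgb)
    have h_head : |∫ x, ∫ y, g y ∂Pn m x ∂ν m - ∫ x, ∫ y, g y ∂P x ∂ν m| ≤ δ :=
      abs_integral_sub_integral_le
        (integrable_integral_kernel_of_abs_le_one _ hg hgb)
        (integrable_integral_kernel_of_abs_le_one _ hg hgb)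
        (hδ m hm g hg hgb)
    have h_iter : ∀ x, ∫ y, g y ∂P x = ∫ y, f y ∂iterKer P (k + 1) x := fun x ↦
      (integral_iterKer_succ P k (integrable_of_abs_le_one hf hb)).symm
    rw [show m + (k + 1) = m + 1 + k by omega, ← funext h_iter]
    calc _ ≤ |∫ x, f x ∂ν (m + 1 + k) - ∫ x, g x ∂ν (m + 1)|
          + |∫ x, g x ∂ν (m + 1) - ∫ x, ∫ y, g y ∂P x ∂ν m| := abs_sub_le _ _ _
      _ ≤ k * δ + δ := add_le_add h_tail (h_step ▸ h_head)
      _ = (k + 1 : ℕ) * δ := by push_cast; ring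

end

theorem stmt12_general {X : Type*} [MeasurableSpace X]
    (P : Kernel X X) (Pn : ℕ → Kernel X X)
    [IsMarkovKernel P] [∀ n, IsMarkovKernel (Pn n)]
    (π : Measure X)
    (C ρ : ℝ) (hρ : ρ ∈ Set.Ioo (0 : ℝ) 1)
    (hP : ∀ (k : ℕ) (f : X → ℝ), Measurable f → (∀ x, |f x| ≤ 1) →
      ∀ x, |(∫ y, f y ∂(iterKer P k x)) - ∫ y, f y ∂π| ≤ C * ρ ^ k)
    (hPconv : ∀ ε : ℝ, 0 < ε → ∃ N : ℕ, ∀ n ≥ N,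
      ∀ (f : X → ℝ), Measurable f → (∀ x, |f x| ≤ 1) →
        ∀ x, |(∫ y, f y ∂(Pn n x)) - ∫ y, f y ∂(P x)| ≤ ε)
    (μ : Measure X) [IsProbabilityMeasure μ]
    (ν : ℕ → Measure X) (hν0 : ν 0 = μ)
    (hν : ∀ n, ν (n + 1) = (ν n).bind (fun x => Pn n x)) :
    ∀ ε : ℝ, 0 < ε → ∃ N : ℕ, ∀ n ≥ N,
      ∀ (f : X → ℝ), Measurable f → (∀ x, |f x| ≤ 1) →
        |(∫ x, f x ∂(ν n)) - ∫ x, f x ∂π| ≤ ε := by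
  intro ε hε
  have hν_prob : ∀ n, IsProbabilityMeasure (ν n) := fun n ↦ by
    induction n with
    | zero => rw [hν0]; infer_instance
    | succ n _ => rw [hν n]; infer_instance
  have h_geom : Tendsto (fun k : ℕ ↦ C * ρ ^ k) atTop (𝓝 0) := by
    simpa using (tendsto_pow_atTop_nhds_zero_of_lt_one hρ.1.le hρ.2).const_mul C
  obtain ⟨k, hk⟩ := (h_geom.eventually (ge_mem_nhds (half_pos hε))).exists
  set δ := ε / 2 / (k + 1)
  have hkδ : k * δ ≤ ε / 2 := by
    calc k * δ ≤ (k + 1) * δ := by gcongr; linarith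
      _ = ε / 2 := by unfold δ; field_simp
  obtain ⟨N, hN⟩ := hPconv δ (by positivity)
  refine ⟨N + k, fun n hn f hf hb ↦ ?_⟩
  obtain ⟨m, rfl⟩ : ∃ m, n = m + k := ⟨n - k, by omega⟩
  have h_perturb := abs_integral_sub_integral_iterKer_le hν hN k (m := m) (by omega) hf hb
  have h_mix : |∫ x, ∫ y, f y ∂iterKer P k x ∂ν m - ∫ x, f x ∂π| ≤ C * ρ ^ k := by
    simpa using abs_integral_sub_integral_le (m := ν m)
      (integrable_integral_kernel_of_abs_le_one _ hf hb)
      (integrable_const (∫ x, f x ∂π)) (hP k f hf hb)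
  calc _ ≤ |∫ x, f x ∂ν (m + k) - ∫ x, ∫ y, f y ∂iterKer P k x ∂ν m|
        + |∫ x, ∫ y, f y ∂iterKer P k x ∂ν m - ∫ x, f x ∂π| := abs_sub_le _ _ _
    _ ≤ ε / 2 + ε / 2 := add_le_add (h_perturb.trans hkδ) (h_mix.trans hk)
    _ = ε := add_halves ε

/-- Theorem V.4.5 of Isaacson–Madsen: if `‖Pₙ - P‖ → 0` in the uniform operator norm and
`P` is uniformly geometrically ergodic with invariant distribution `π`, then the
nonhomogeneous chain with kernels `(Pₙ)` is strongly ergodic: for any initial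
distribution `μ`, `‖μ P₀ P₁ ⋯ Pₙ - π‖_TV → 0`. -/
theorem stmt12 {X : Type*} [MeasurableSpace X]
    (P : Kernel X X) (Pn : ℕ → Kernel X X)
    [IsMarkovKernel P] [∀ n, IsMarkovKernel (Pn n)]
    (π : Measure X) [IsProbabilityMeasure π]
    (hπinv : π.bind (fun x => P x) = π)
    (C ρ : ℝ) (hρ : ρ ∈ Set.Ioo (0 : ℝ) 1)
    (hP : ∀ (k : ℕ) (f : X → ℝ), Measurable f → (∀ x, |f x| ≤ 1) →
      ∀ x, |(∫ y, f y ∂(iterKer P k x)) - ∫ y, f y ∂π| ≤ C * ρ ^ k)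
    (hPconv : ∀ ε : ℝ, 0 < ε → ∃ N : ℕ, ∀ n ≥ N,
      ∀ (f : X → ℝ), Measurable f → (∀ x, |f x| ≤ 1) →
        ∀ x, |(∫ y, f y ∂(Pn n x)) - ∫ y, f y ∂(P x)| ≤ ε)
    (μ : Measure X) [IsProbabilityMeasure μ]
    (ν : ℕ → Measure X) (hν0 : ν 0 = μ)
    (hν : ∀ n, ν (n + 1) = (ν n).bind (fun x => Pn n x)) :
    ∀ ε : ℝ, 0 < ε → ∃ N : ℕ, ∀ n ≥ N,
      ∀ (f : X → ℝ), Measurable f → (∀ x, |f x| ≤ 1) →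
        |(∫ x, f x ∂(ν n)) - ∫ x, f x ∂π| ≤ ε :=
  stmt12_general P Pn π C ρ hρ hP hPconv μ ν hν0 hν
end
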